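/- Let T̃_m denote the number of typed search walks of length m, and let t = Σ_{m ≥ 1} T̃_m z^m be the associated formal power series (over the integers, with constant term 0). Then t satisfies the identity 3z·t^3 + (1+z)·t^2 − (1+z)·t + z = 0 in the ring of formal power series. -/

import Mathlib

/-- A search walk: a finite sequence of nonzero integers each at most `1`,
all of whose partial sums are at least `1`, and whose total sum is `1`. -/
def IsSearchWalk (D : List ℤ) : Prop :=
  (∀ d ∈ D, d ≠ 0 ∧ d ≤ 1) ∧
  (∀ k, 1 ≤ k → k ≤ D.length → 1 ≤ (D.take k).sum) ∧
  D.sum = 1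

/-- `Tt m` is the number of typed search walks of length `m`: pairs of a search
walk `D` of length `m` together with an assignment of a label in `{1,2,3,4}`
(here modelled as `Fin 4`) to each entry of `D` that is at most `-2` (the
assignment is recorded as the list of labels of those entries in order). -/
noncomputable def Tt (m : ℕ) : ℕ :=
  Nat.card {p : List ℤ × List (Fin 4) //
    p.1.length = m ∧ IsSearchWalk p.1 ∧
    p.2.length = (p.1.filter fun d => decide (d ≤ -2)).length}
/-- The generating function of the numbers of typed search walks, as a formal
power series over `ℤ` with constant term `0`. -/
noncomputable def t : PowerSeries ℤ :=
  PowerSeries.mk fun m => if m = 0 then 0 else (Tt m : ℤ)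

/-!
Let `W_s` count search walks ending at height `s`, each weighted by `4` for every step of size
at most `-2`, so that `t = W_1`. Cutting a walk to height `j + 1` at its last visit to heights
at most `j` gives `W_{j+1} = W_j W_1`, hence `W_s = t^s`. Removing the last step gives
`W_s = z Σ_e w(s - e) W_e` for `s ≥ 1`, where `w(d)` is the number of typed steps of size `d`.
Since `w(1 - e) = w(2 - e)` for `e ≥ 4`, subtracting the cases `s = 1` and `s = 2` leaves
`t - t² = z (1 - t + t² + 3t³)`, which is the claimed identity.
-/

namespace SearchWalk

open Finset

/-- `IsSearchWalk D` is definitionally `IsSearchWalkTo 1 D`. -/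
def IsSearchWalkTo (s : ℤ) (D : List ℤ) : Prop :=
  (∀ d ∈ D, d ≠ 0 ∧ d ≤ 1) ∧
  (∀ k, 1 ≤ k → k ≤ D.length → 1 ≤ (D.take k).sum) ∧
  D.sum = s

theorem isSearchWalkTo_nil {s : ℤ} : IsSearchWalkTo s [] ↔ s = 0 := by
  refine ⟨fun h => h.2.2.symm, fun h => ⟨by simp, fun k hk1 hk2 => ?_, h ▸ rfl⟩⟩
  simp only [List.length_nil] at hk2
  omega

theorem isSearchWalkTo_concat {s d : ℤ} {A : List ℤ} :
    IsSearchWalkTo s (A ++ [d]) ↔ (d ≠ 0 ∧ d ≤ 1) ∧ 1 ≤ s ∧ IsSearchWalkTo (s - d) A := by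
  have take_concat : ∀ k ≤ A.length, (A ++ [d]).take k = A.take k := fun k hk =>
    List.take_append_of_le_length hk
  simp only [IsSearchWalkTo, List.mem_append, List.mem_singleton, List.length_append,
    List.length_singleton, List.sum_append, List.sum_singleton]
  constructor
  · rintro ⟨hsteps, hpos, hsum⟩
    refine ⟨hsteps d (Or.inr rfl), ?_, fun e he => hsteps e (Or.inl he), fun k hk1 hk2 => ?_,
      by omega⟩
    · simpa [hsum] using hpos (A.length + 1) (by omega) le_rfl
    · simpa [take_concat k hk2] using hpos k hk1 (by omega)
  · rintro ⟨hd, hs, hsteps, hpos, hsum⟩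
    refine ⟨fun e he => he.elim (hsteps e) (· ▸ hd), fun k hk1 hk2 => ?_, by omega⟩
    rcases Nat.lt_or_ge A.length k with hk | hk
    · rw [List.take_of_length_le (by simp; omega)]
      simp only [List.sum_append, List.sum_singleton]
      omega
    · rw [take_concat k hk]
      exact hpos k hk1 hk

theorem IsSearchWalkTo.nonneg {s : ℤ} {D : List ℤ} (h : IsSearchWalkTo s D) : 0 ≤ s := by
  rcases D.eq_nil_or_concat' with rfl | ⟨A, d, rfl⟩
  · exact (isSearchWalkTo_nil.1 h).ge
  · have := (isSearchWalkTo_concat.1 h).2.1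
    omega

theorem IsSearchWalkTo.le_length {s : ℤ} {D : List ℤ} (h : IsSearchWalkTo s D) :
    s ≤ D.length := by
  simpa [h.2.2] using D.sum_le_card_nsmul 1 fun d hd => (h.1 d hd).2

theorem isSearchWalkTo_zero {D : List ℤ} : IsSearchWalkTo 0 D ↔ D = [] := by
  refine ⟨fun h => ?_, fun h => h ▸ isSearchWalkTo_nil.2 rfl⟩
  rcases D.eq_nil_or_concat' with rfl | ⟨A, d, rfl⟩
  · rfl
  · exact absurd (isSearchWalkTo_concat.1 h).2.1 (by norm_num)

theorem IsSearchWalkTo.append {a b : ℤ} {A B : List ℤ} (hA : IsSearchWalkTo a A)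
    (hB : IsSearchWalkTo b B) : IsSearchWalkTo (a + b) (A ++ B) := by
  induction B using List.reverseRecOn generalizing b with
  | nil => simpa [isSearchWalkTo_nil.1 hB] using hA
  | append_singleton B d ih =>
    obtain ⟨hd, hb, hB⟩ := isSearchWalkTo_concat.1 hB
    rw [← List.append_assoc, isSearchWalkTo_concat]
    exact ⟨hd, by linarith [hA.nonneg], by simpa [add_sub_assoc] using ih hB⟩

theorem IsSearchWalkTo.exists_append {s j : ℤ} {D : List ℤ} (hD : IsSearchWalkTo s D)
    (hj : 0 ≤ j) (hjs : j < s) :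
    ∃ A B, D = A ++ B ∧ IsSearchWalkTo j A ∧ IsSearchWalkTo (s - j) B := by
  induction D using List.reverseRecOn generalizing s with
  | nil => exact absurd (isSearchWalkTo_nil.1 hD) (by omega)
  | append_singleton D d ih =>
    obtain ⟨hd, hs, hD⟩ := isSearchWalkTo_concat.1 hD
    by_cases hjd : j = s - d
    · rw [show s - j = d by omega]
      exact ⟨D, [d], by simp, hjd ▸ hD, (isSearchWalkTo_concat (A := [])).2
        ⟨hd, by omega, isSearchWalkTo_nil.2 (sub_self d)⟩⟩
    · obtain ⟨A, B, rfl, hA, hB⟩ := ih hD (by omega)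
      exact ⟨A, B ++ [d], by simp, hA, isSearchWalkTo_concat.2 ⟨hd, by omega, by
        simpa [sub_right_comm] using hB⟩⟩

theorem IsSearchWalkTo.eq_nil_of_append {s : ℤ} {C E : List ℤ} (h : IsSearchWalkTo s (C ++ E))
    (hC : C.sum = 0) : C = [] := by
  induction E using List.reverseRecOn generalizing s with
  | nil =>
    rw [List.append_nil] at h
    obtain rfl : s = 0 := h.2.2 ▸ hC
    exact isSearchWalkTo_zero.1 h
  | append_singleton E d ih =>
    rw [← List.append_assoc] at h
    exact ih (isSearchWalkTo_concat.1 h).2.2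

theorem finite_setOf_isSearchWalkTo (s : ℤ) (m : ℕ) :
    {D : List ℤ | D.length = m ∧ IsSearchWalkTo s D}.Finite := by
  induction m generalizing s with
  | zero =>
    refine (Set.finite_singleton []).subset fun D hD => ?_
    exact List.length_eq_zero_iff.1 hD.1
  | succ m ih =>
    refine ((Set.finite_Icc (s - m) 1).biUnion fun d _ => (ih (s - d)).image (· ++ [d])).subset ?_
    rintro D ⟨hlen, hD⟩
    obtain ⟨A, d, rfl⟩ := (D.eq_nil_or_concat').resolve_left (by rintro rfl; simp at hlen)
    obtain ⟨hd, -, hA⟩ := isSearchWalkTo_concat.1 hD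
    have hAlen : A.length = m := by simpa using hlen
    refine Set.mem_biUnion (x := d) ⟨?_, hd.2⟩ ⟨A, ⟨hAlen, hA⟩, rfl⟩
    linarith [hA.le_length]

noncomputable def walks (s : ℤ) (m : ℕ) : Finset (List ℤ) :=
  (finite_setOf_isSearchWalkTo s m).toFinset

theorem mem_walks {s : ℤ} {m : ℕ} {D : List ℤ} :
    D ∈ walks s m ↔ D.length = m ∧ IsSearchWalkTo s D :=
  Set.Finite.mem_toFinset _

/-- The number of typed steps of size `d`. -/
def stepWeight (d : ℤ) : ℕ :=
  if d ≠ 0 ∧ d ≤ 1 then (if d ≤ -2 then 4 else 1) else 0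

def walkWeight (D : List ℤ) : ℕ :=
  (D.map stepWeight).prod

theorem walkWeight_append (A B : List ℤ) : walkWeight (A ++ B) = walkWeight A * walkWeight B := by
  simp [walkWeight]

theorem walkWeight_eq_pow {D : List ℤ} (hD : ∀ d ∈ D, d ≠ 0 ∧ d ≤ 1) :
    walkWeight D = 4 ^ (D.filter fun d => decide (d ≤ -2)).length := by
  induction D with
  | nil => rfl
  | cons d D ih =>
    obtain ⟨hd, hD⟩ := List.forall_mem_cons.1 hD
    rw [walkWeight, List.map_cons, List.prod_cons, ← walkWeight, ih hD, List.filter_cons,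
      stepWeight, if_pos hd]
    by_cases h : d ≤ -2 <;> simp [h, pow_succ, mul_comm]

noncomputable def walkCount (s : ℤ) (m : ℕ) : ℕ :=
  ∑ D ∈ walks s m, walkWeight D

theorem walkCount_eq_zero_of_lt {s : ℤ} {m : ℕ} (h : (m : ℤ) < s) : walkCount s m = 0 := by
  refine sum_eq_zero fun D hD => absurd h ?_
  obtain ⟨hlen, hD⟩ := mem_walks.1 hD
  simpa [hlen] using hD.le_length

theorem walkCount_zero_left (m : ℕ) : walkCount 0 m = if m = 0 then 1 else 0 := by
  have hwalks : walks 0 m = ({[]} : Finset (List ℤ)).filter (·.length = m) := by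
    ext D
    simp [mem_walks, isSearchWalkTo_zero, and_comm]
  rcases eq_or_ne m 0 with rfl | hm
  · simp [walkCount, hwalks, walkWeight, filter_singleton]
  · simp [walkCount, hwalks, hm, Ne.symm hm]

theorem append_injective_of_isSearchWalkTo {b b' : ℤ} {A A' B B' : List ℤ}
    (hA : A.sum = A'.sum) (hB : IsSearchWalkTo b B) (hB' : IsSearchWalkTo b' B')
    (h : A ++ B = A' ++ B') : A = A' ∧ B = B' := by
  rcases List.append_eq_append_iff.1 h with ⟨C, rfl, rfl⟩ | ⟨C, rfl, rfl⟩
  · obtain rfl := hB.eq_nil_of_append (by simpa using hA)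
    simp
  · obtain rfl := hB'.eq_nil_of_append (by simpa using hA)
    simp

theorem walkCount_natCast_add_one (j m : ℕ) :
    walkCount (j + 1) m = ∑ p ∈ antidiagonal m, walkCount j p.1 * walkCount 1 p.2 := by
  simp only [walkCount, sum_mul_sum, ← sum_product', ← walkWeight_append]
  rw [sum_sigma']
  refine (sum_bij (fun x _ => x.2.1 ++ x.2.2) ?_ ?_ ?_ fun _ _ => rfl).symm
  · rintro ⟨⟨a, b⟩, A, B⟩ hx
    simp only [mem_sigma, HasAntidiagonal.mem_antidiagonal, mem_product, mem_walks] at hx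
    obtain ⟨rfl, ⟨rfl, hA⟩, ⟨rfl, hB⟩⟩ := hx
    simpa [mem_walks] using hA.append hB
  · rintro ⟨⟨a, b⟩, A, B⟩ hx ⟨⟨a', b'⟩, A', B'⟩ hx' h
    simp only [mem_sigma, HasAntidiagonal.mem_antidiagonal, mem_product, mem_walks] at hx hx'
    obtain ⟨rfl, rfl⟩ := append_injective_of_isSearchWalkTo
      (hx.2.1.2.2.2.trans hx'.2.1.2.2.2.symm) hx.2.2.2 hx'.2.2.2 h
    simp only [← hx.2.1.1, ← hx.2.2.1, ← hx'.2.1.1, ← hx'.2.2.1]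
  · intro D hD
    obtain ⟨hlen, hD⟩ := mem_walks.1 hD
    obtain ⟨A, B, rfl, hA, hB⟩ := hD.exists_append (j := j) (by positivity) (by omega)
    refine ⟨⟨(A.length, B.length), A, B⟩, ?_, rfl⟩
    simp_all [mem_walks]

theorem stepWeight_ne_zero_iff {d : ℤ} : stepWeight d ≠ 0 ↔ d ≠ 0 ∧ d ≤ 1 := by
  unfold stepWeight
  split_ifs <;> simp_all

theorem walkCount_succ {s : ℤ} (hs : 1 ≤ s) (m : ℕ) :
    walkCount s (m + 1) = ∑ e ∈ range (m + 1), stepWeight (s - e) * walkCount e m := by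
  simp only [walkCount, mul_sum]
  rw [sum_sigma']
  refine (sum_bij_ne_zero (fun x _ _ => x.2 ++ [s - x.1]) ?_ ?_ ?_ ?_).symm
  · rintro ⟨e, A⟩ hx hne
    simp only [mem_sigma, mem_range, mem_walks] at hx
    refine mem_walks.2 ⟨by simp [hx.2.1], isSearchWalkTo_concat.2 ⟨?_, hs, by simpa using hx.2.2⟩⟩
    exact stepWeight_ne_zero_iff.1 (left_ne_zero_of_mul hne)
  · rintro ⟨e, A⟩ - - ⟨e', A'⟩ - - h
    obtain ⟨rfl, he⟩ := List.append_inj' h rfl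
    obtain rfl : e = e' := by simpa using he
    rfl
  · intro D hD hne
    obtain ⟨hlen, hD⟩ := mem_walks.1 hD
    obtain ⟨A, d, rfl⟩ := D.eq_nil_or_concat'.resolve_left (by rintro rfl; simp at hlen)
    obtain ⟨hd, -, hA⟩ := isSearchWalkTo_concat.1 hD
    have he : ((s - d).toNat : ℤ) = s - d := Int.toNat_of_nonneg hA.nonneg
    refine ⟨⟨(s - d).toNat, A⟩, ?_, ?_, by simp [he]⟩
    · have hAlen : A.length = m := by simpa using hlen
      have := hA.le_length
      simp only [mem_sigma, mem_range, mem_walks, he]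
      exact ⟨by omega, hAlen, hA⟩
    · simpa [he, walkWeight_append, walkWeight, mul_comm] using hne
  · rintro ⟨e, A⟩ - -
    simp [walkWeight, mul_comm]

theorem walkCount_one_sub_walkCount_two (m : ℕ) :
    (walkCount 1 (m + 1) : ℤ) - walkCount 2 (m + 1) =
      walkCount 0 m - walkCount 1 m + walkCount 2 m + 3 * walkCount 3 m := by
  set g : ℕ → ℤ := fun e => ((stepWeight (1 - e) : ℤ) - stepWeight (2 - e)) * walkCount e m
  have hfar : ∀ e : ℕ, 4 ≤ e → stepWeight (1 - e) = stepWeight (2 - e) := fun e he => by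
    simp only [stepWeight]
    split_ifs <;> omega
  calc (walkCount 1 (m + 1) : ℤ) - walkCount 2 (m + 1)
      = ∑ e ∈ range (m + 1), g e := by
        rw [walkCount_succ le_rfl, walkCount_succ (by norm_num)]
        push_cast
        rw [← sum_sub_distrib]
        exact sum_congr rfl fun e _ => by ring
    _ = ∑ e ∈ range (m + 4), g e := by
        refine sum_subset (range_subset_range.2 (by omega)) fun e _ he => ?_
        simp only [g]
        rw [walkCount_eq_zero_of_lt (by simp at he; omega), Nat.cast_zero, mul_zero]
    _ = ∑ e ∈ range 4, g e := by
        refine (sum_subset (range_subset_range.2 (by omega)) fun e _ he => ?_).symm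
        simp only [g]
        rw [hfar e (by simpa using he), sub_self, zero_mul]
    _ = _ := by
        simp [g, sum_range_succ, stepWeight]
        ring

open PowerSeries

noncomputable def walkSeries (s : ℕ) : PowerSeries ℤ :=
  mk fun m => (walkCount s m : ℤ)

theorem walkSeries_zero : walkSeries 0 = 1 := by
  ext m
  simp [walkSeries, walkCount_zero_left, coeff_one]

theorem walkSeries_succ (j : ℕ) : walkSeries (j + 1) = walkSeries j * walkSeries 1 := by
  ext m
  simp [walkSeries, coeff_mul, walkCount_natCast_add_one]

theorem walkSeries_eq_pow (j : ℕ) : walkSeries j = walkSeries 1 ^ j := by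
  induction j with
  | zero => exact walkSeries_zero
  | succ j ih => rw [walkSeries_succ, ih, pow_succ]

theorem walkSeries_one_sub_walkSeries_two :
    walkSeries 1 - walkSeries 2 =
      X * (walkSeries 0 - walkSeries 1 + walkSeries 2 + 3 * walkSeries 3) := by
  ext (_ | m)
  · simp [walkSeries, walkCount_eq_zero_of_lt]
  · rw [show (3 : PowerSeries ℤ) = C 3 by simp]
    simpa only [walkSeries, coeff_succ_X_mul, map_sub, map_add, coeff_C_mul, coeff_mk,
      Nat.cast_ofNat, Nat.cast_one, Nat.cast_zero]
      using walkCount_one_sub_walkCount_two m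

def typedSearchWalkEquiv (m : ℕ) :
    {p : List ℤ × List (Fin 4) // p.1.length = m ∧ IsSearchWalk p.1 ∧
      p.2.length = (p.1.filter fun d => decide (d ≤ -2)).length} ≃
    Σ D : walks 1 m, List.Vector (Fin 4) (D.1.filter fun d => decide (d ≤ -2)).length where
  toFun p := ⟨⟨p.1.1, mem_walks.2 ⟨p.2.1, p.2.2.1⟩⟩, ⟨p.1.2, p.2.2.2⟩⟩
  invFun x := ⟨(x.1.1, x.2.1), (mem_walks.1 x.1.2).1, (mem_walks.1 x.1.2).2, x.2.2⟩
  left_inv _ := rfl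
  right_inv _ := rfl

theorem Tt_eq_walkCount (m : ℕ) : Tt m = walkCount 1 m := by
  rw [Tt, Nat.card_congr (typedSearchWalkEquiv m), Nat.card_sigma, walkCount]
  simp only [Nat.card_eq_fintype_card, card_vector, Fintype.card_fin]
  rw [← sum_coe_sort (walks 1 m)]
  exact sum_congr rfl fun D _ => (walkWeight_eq_pow (mem_walks.1 D.2).2.1).symm

theorem t_eq_walkSeries : t = walkSeries 1 := by
  ext m
  rcases eq_or_ne m 0 with rfl | hm
  · simp [t, walkSeries, walkCount_eq_zero_of_lt]
  · simp [t, walkSeries, hm, Tt_eq_walkCount]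

end SearchWalk

/-- The generating function `t = Σ_{m ≥ 1} T̃_m z^m` of typed-search-walk
counts satisfies `3z·t³ + (1+z)·t² − (1+z)·t + z = 0`. -/
theorem typedSearchWalk_gf_equation :
    3 * PowerSeries.X * t ^ 3 + (1 + PowerSeries.X) * t ^ 2
      - (1 + PowerSeries.X) * t + PowerSeries.X = 0 := by
  have h := SearchWalk.walkSeries_one_sub_walkSeries_two
  rw [SearchWalk.walkSeries_zero, SearchWalk.walkSeries_eq_pow 2, SearchWalk.walkSeries_eq_pow 3,
    ← SearchWalk.t_eq_walkSeries] at h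
  linear_combination -h
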